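/- Assume the joint system (Y_n, N_n) satisfies the recursion above and the criticality condition m(m−1)G_n'(m) = G_n(m) for all n (where G_n(s) = E(s^{Y_n})). Then the weighted expected number of open paths satisfies E[m^{Y_{n+1}}(1+Y_{n+1})N_{n+1}] = G_n(m)^{m−1}·E[m^{Y_n}(1+Y_n)N_n], and hence E[m^{Y_n}(1+Y_n)N_n] = E[m^{Y_0}(1+Y_0)N_0]·∏_{k=0}^{n−1} G_k(m)^{m−1}. -/

import Mathlib

/-!
Write `A = E m^Y`, `B = E[Y m^Y]`, `C = E[m^Y N]`, `D = E[Y m^Y N]`. The new weight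
`m^{Σ_Y - 1} Σ_Y Σ_N` vanishes together with `Σ_Y`, so `m · E[m^{Y'}(1+Y')N'] = E[Σ_Y m^{Σ_Y} Σ_N]`.
As `m^Y` is multiplicative and `Y`, `N` are additive over independent sums, this moment of the sum
of `m` copies is `m D A^{m-1} + m(m-1) B C A^{m-2}`, and criticality `(m-1) B = A` turns it into
`m A^{m-1} (C + D) = m A^{m-1} E[m^Y (1+Y) N]`.
-/

open scoped ENNReal

/-- Law of the componentwise sum of `n` i.i.d. copies of a pair-valued `PMF`. -/
noncomputable def sumIID2 (p : PMF (ℕ × ℕ)) : ℕ → PMF (ℕ × ℕ)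
  | 0 => PMF.pure (0, 0)
  | (k+1) => (sumIID2 p k).bind (fun s => p.map (fun a => (a.1 + s.1, a.2 + s.2)))

/-- One step of the joint recursion:
`(Y', N') = (Σ_Y − 1, Σ_N)` if `Σ_Y ≥ 1` and `(0, 0)` if `Σ_Y = 0`. -/
noncomputable def jointStep (m : ℕ) (p : PMF (ℕ × ℕ)) : PMF (ℕ × ℕ) :=
  (sumIID2 p m).map (fun z => if z.1 = 0 then (0, 0) else (z.1 - 1, z.2))

namespace PMF

variable {α β : Type*}

noncomputable def expect (p : PMF α) (f : α → ℝ≥0∞) : ℝ≥0∞ := ∑' a, p a * f a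

lemma expect_pure (a : α) (f : α → ℝ≥0∞) : (pure a).expect f = f a := by
  rw [expect, tsum_eq_single a fun b hb => by simp [pure_apply_of_ne _ _ hb], pure_apply_self,
    one_mul]

lemma expect_bind (p : PMF α) (q : α → PMF β) (f : β → ℝ≥0∞) :
    (p.bind q).expect f = p.expect fun a => (q a).expect f := by
  simp only [expect, bind_apply, ← ENNReal.tsum_mul_right, ← ENNReal.tsum_mul_left, mul_assoc]
  exact ENNReal.tsum_comm

lemma expect_map (p : PMF α) (g : α → β) (f : β → ℝ≥0∞) :
    (p.map g).expect f = p.expect fun a => f (g a) := by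
  rw [map, expect_bind]
  simp only [Function.comp_apply, expect_pure]

lemma expect_add (p : PMF α) (f g : α → ℝ≥0∞) :
    p.expect (fun a => f a + g a) = p.expect f + p.expect g := by
  simp only [expect, mul_add, ENNReal.tsum_add]

lemma expect_const_mul (p : PMF α) (c : ℝ≥0∞) (f : α → ℝ≥0∞) :
    p.expect (fun a => c * f a) = c * p.expect f := by
  simp only [expect, mul_left_comm _ c, ENNReal.tsum_mul_left]

lemma expect_expect_mul (p : PMF α) (q : PMF β) (f : α → ℝ≥0∞) (g : β → ℝ≥0∞) :
    (q.expect fun b => p.expect fun a => f a * g b) = p.expect f * q.expect g := by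
  simp only [mul_comm (f _), expect_const_mul, mul_comm _ (p.expect f)]

end PMF

open PMF

lemma expect_sumIID2_succ (p : PMF (ℕ × ℕ)) (k : ℕ) (f : ℕ × ℕ → ℝ≥0∞) :
    (sumIID2 p (k + 1)).expect f = (sumIID2 p k).expect fun s => p.expect fun a => f (a + s) := by
  simp only [sumIID2, expect_bind, expect_map]
  rfl

lemma expect_sumIID2_one (p : PMF (ℕ × ℕ)) (f : ℕ × ℕ → ℝ≥0∞) :
    (sumIID2 p 1).expect f = p.expect f := by
  rw [expect_sumIID2_succ]
  simp only [sumIID2, expect_pure, Prod.mk_zero_zero, add_zero]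

section Moments

variable (p : PMF (ℕ × ℕ)) {w g h : ℕ × ℕ → ℝ≥0∞}

lemma expect_sumIID2_succ_mul_hom (hw : ∀ a s, w (a + s) = w a * w s) (k : ℕ) :
    (sumIID2 p (k + 1)).expect w = p.expect w * (sumIID2 p k).expect w := by
  simp only [expect_sumIID2_succ, hw, expect_expect_mul]

lemma expect_sumIID2_succ_add_hom_mul (hw : ∀ a s, w (a + s) = w a * w s)
    (hg : ∀ a s, g (a + s) = g a + g s) (k : ℕ) :
    (sumIID2 p (k + 1)).expect (fun z => g z * w z)
      = p.expect (fun z => g z * w z) * (sumIID2 p k).expect w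
        + p.expect w * (sumIID2 p k).expect (fun z => g z * w z) := by
  have split : ∀ a s, g (a + s) * w (a + s) = g a * w a * w s + w a * (g s * w s) := by
    intro a s; rw [hg, hw]; ring
  simp only [expect_sumIID2_succ, split, expect_add, expect_expect_mul]

lemma expect_sumIID2_succ_add_hom_mul_add_hom_mul (hw : ∀ a s, w (a + s) = w a * w s)
    (hg : ∀ a s, g (a + s) = g a + g s) (hh : ∀ a s, h (a + s) = h a + h s) (k : ℕ) :
    (sumIID2 p (k + 1)).expect (fun z => g z * h z * w z)
      = p.expect (fun z => g z * h z * w z) * (sumIID2 p k).expect w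
        + p.expect (fun z => g z * w z) * (sumIID2 p k).expect (fun z => h z * w z)
        + p.expect (fun z => h z * w z) * (sumIID2 p k).expect (fun z => g z * w z)
        + p.expect w * (sumIID2 p k).expect (fun z => g z * h z * w z) := by
  have split : ∀ a s, g (a + s) * h (a + s) * w (a + s)
      = g a * h a * w a * w s + g a * w a * (h s * w s) + h a * w a * (g s * w s)
        + w a * (g s * h s * w s) := by
    intro a s; rw [hg, hh, hw]; ring
  simp only [expect_sumIID2_succ, split, expect_add, expect_expect_mul]

lemma expect_sumIID2_mul_hom (hw : ∀ a s, w (a + s) = w a * w s) (k : ℕ) :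
    (sumIID2 p (k + 1)).expect w = p.expect w ^ (k + 1) := by
  induction k with
  | zero => rw [expect_sumIID2_one, zero_add, pow_one]
  | succ k ih => rw [expect_sumIID2_succ_mul_hom p hw, ih, ← pow_succ']

lemma expect_sumIID2_add_hom_mul (hw : ∀ a s, w (a + s) = w a * w s)
    (hg : ∀ a s, g (a + s) = g a + g s) (k : ℕ) :
    (sumIID2 p (k + 1)).expect (fun z => g z * w z)
      = (k + 1) * p.expect (fun z => g z * w z) * p.expect w ^ k := by
  induction k with
  | zero => simp [expect_sumIID2_one]
  | succ k ih =>
    rw [expect_sumIID2_succ_add_hom_mul p hw hg, ih, expect_sumIID2_mul_hom p hw]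
    push_cast
    ring

lemma expect_sumIID2_add_hom_mul_add_hom_mul (hw : ∀ a s, w (a + s) = w a * w s)
    (hg : ∀ a s, g (a + s) = g a + g s) (hh : ∀ a s, h (a + s) = h a + h s) (k : ℕ) :
    (sumIID2 p (k + 2)).expect (fun z => g z * h z * w z)
      = (k + 2) * p.expect (fun z => g z * h z * w z) * p.expect w ^ (k + 1)
        + (k + 2) * (k + 1) * p.expect (fun z => g z * w z) * p.expect (fun z => h z * w z)
          * p.expect w ^ k := by
  induction k with
  | zero =>
    rw [expect_sumIID2_succ_add_hom_mul_add_hom_mul p hw hg hh]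
    simp only [expect_sumIID2_one]
    ring
  | succ k ih =>
    rw [expect_sumIID2_succ_add_hom_mul_add_hom_mul p hw hg hh, ih,
      expect_sumIID2_mul_hom p hw, expect_sumIID2_add_hom_mul p hw hg,
      expect_sumIID2_add_hom_mul p hw hh]
    push_cast
    ring

end Moments

lemma expect_jointStep (m : ℕ) (p : PMF (ℕ × ℕ)) (M : ℝ≥0∞) :
    M * (jointStep m p).expect (fun z => M ^ z.1 * (1 + (z.1 : ℝ≥0∞)) * z.2)
      = (sumIID2 p m).expect fun z => z.1 * z.2 * M ^ z.1 := by
  rw [jointStep, expect_map, ← expect_const_mul]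
  congr 1
  funext ⟨y, n⟩
  cases y with
  | zero => simp
  | succ y =>
    simp only [Nat.add_eq_zero_iff, one_ne_zero, and_false, if_false, Nat.add_sub_cancel]
    push_cast
    ring

lemma expect_jointStep_of_critical {m : ℕ} (hm : 2 ≤ m) (p : PMF (ℕ × ℕ))
    (hcrit : ((m : ℝ≥0∞) - 1) * p.expect (fun z => z.1 * (m : ℝ≥0∞) ^ z.1)
      = p.expect fun z => (m : ℝ≥0∞) ^ z.1) :
    (jointStep m p).expect (fun z => (m : ℝ≥0∞) ^ z.1 * (1 + (z.1 : ℝ≥0∞)) * z.2)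
      = (p.expect fun z => (m : ℝ≥0∞) ^ z.1) ^ (m - 1)
        * p.expect (fun z => (m : ℝ≥0∞) ^ z.1 * (1 + (z.1 : ℝ≥0∞)) * z.2) := by
  obtain ⟨j, rfl⟩ : ∃ j, m = j + 2 := ⟨m - 2, by omega⟩
  have hw : ∀ a s : ℕ × ℕ, ((j + 2 : ℕ) : ℝ≥0∞) ^ (a + s).1
      = ((j + 2 : ℕ) : ℝ≥0∞) ^ a.1 * ((j + 2 : ℕ) : ℝ≥0∞) ^ s.1 := fun a s => pow_add ..
  have hg : ∀ a s : ℕ × ℕ, ((a + s).1 : ℝ≥0∞) = a.1 + s.1 := fun a s => Nat.cast_add ..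
  have hh : ∀ a s : ℕ × ℕ, ((a + s).2 : ℝ≥0∞) = a.2 + s.2 := fun a s => Nat.cast_add ..
  have hcrit' : ((j + 1 : ℕ) : ℝ≥0∞) * p.expect (fun z => z.1 * ((j + 2 : ℕ) : ℝ≥0∞) ^ z.1)
      = p.expect fun z => ((j + 2 : ℕ) : ℝ≥0∞) ^ z.1 := by
    rwa [← Nat.cast_one, ← ENNReal.natCast_sub] at hcrit
  have hsplit : p.expect (fun z => ((j + 2 : ℕ) : ℝ≥0∞) ^ z.1 * (1 + (z.1 : ℝ≥0∞)) * z.2)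
      = p.expect (fun z => z.1 * z.2 * ((j + 2 : ℕ) : ℝ≥0∞) ^ z.1)
        + p.expect (fun z => z.2 * ((j + 2 : ℕ) : ℝ≥0∞) ^ z.1) := by
    rw [← expect_add]
    congr 1
    funext z
    ring
  refine (ENNReal.mul_right_inj (by positivity) (ENNReal.natCast_ne_top _)).mp ?_
  rw [expect_jointStep, expect_sumIID2_add_hom_mul_add_hom_mul p hw hg hh j, hsplit, ← hcrit',
    show j + 2 - 1 = j + 1 from rfl]
  push_cast
  ring

theorem stmt17_general (m : ℕ) (hm : 2 ≤ m) (P : ℕ → PMF (ℕ × ℕ))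
    (hP : ∀ n, P (n+1) = jointStep m (P n))
    -- criticality: (m−1)·E(Y_n m^{Y_n}) = E(m^{Y_n}) for every n
    (hcrit : ∀ n, ((m : ℝ≥0∞) - 1)
          * (∑' z : ℕ × ℕ, P n z * ((z.1 : ℝ≥0∞) * (m : ℝ≥0∞) ^ z.1))
        = ∑' z : ℕ × ℕ, P n z * (m : ℝ≥0∞) ^ z.1) :
    (∀ n, (∑' z : ℕ × ℕ, P (n+1) z * ((m : ℝ≥0∞) ^ z.1 * (1 + (z.1 : ℝ≥0∞)) * (z.2 : ℝ≥0∞)))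
        = (∑' z : ℕ × ℕ, P n z * (m : ℝ≥0∞) ^ z.1) ^ (m - 1)
          * ∑' z : ℕ × ℕ, P n z * ((m : ℝ≥0∞) ^ z.1 * (1 + (z.1 : ℝ≥0∞)) * (z.2 : ℝ≥0∞))) ∧
    ∀ n, (∑' z : ℕ × ℕ, P n z * ((m : ℝ≥0∞) ^ z.1 * (1 + (z.1 : ℝ≥0∞)) * (z.2 : ℝ≥0∞)))
        = (∑' z : ℕ × ℕ, P 0 z * ((m : ℝ≥0∞) ^ z.1 * (1 + (z.1 : ℝ≥0∞)) * (z.2 : ℝ≥0∞)))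
          * ∏ k ∈ Finset.range n,
              (∑' z : ℕ × ℕ, P k z * (m : ℝ≥0∞) ^ z.1) ^ (m - 1) := by
  have step (n : ℕ) :
      (P (n + 1)).expect (fun z => (m : ℝ≥0∞) ^ z.1 * (1 + (z.1 : ℝ≥0∞)) * z.2)
        = (P n).expect (fun z => (m : ℝ≥0∞) ^ z.1) ^ (m - 1)
          * (P n).expect (fun z => (m : ℝ≥0∞) ^ z.1 * (1 + (z.1 : ℝ≥0∞)) * z.2) :=
    hP n ▸ expect_jointStep_of_critical hm (P n) (hcrit n)
  refine ⟨step, fun n => ?_⟩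
  induction n with
  | zero => exact (mul_one _).symm
  | succ n ih =>
    rw [Finset.prod_range_succ, ← mul_assoc, ← ih, mul_comm]
    exact step n

theorem stmt17 (m : ℕ) (hm : 2 ≤ m) (P : ℕ → PMF (ℕ × ℕ))
    (hP : ∀ n, P (n+1) = jointStep m (P n))
    -- criticality: (m−1)·E(Y_n m^{Y_n}) = E(m^{Y_n}) for every n
    (hcrit : ∀ n, ((m : ℝ≥0∞) - 1)
          * (∑' z : ℕ × ℕ, P n z * ((z.1 : ℝ≥0∞) * (m : ℝ≥0∞) ^ z.1))
        = ∑' z : ℕ × ℕ, P n z * (m : ℝ≥0∞) ^ z.1)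
    -- finiteness of the weighted moments
    (hfin : ∀ n, (∑' z : ℕ × ℕ,
        P n z * ((m : ℝ≥0∞) ^ z.1 * (1 + (z.1 : ℝ≥0∞)) * (z.2 : ℝ≥0∞))) < ∞)
    (hfin2 : ∀ n, (∑' z : ℕ × ℕ,
        P n z * ((m : ℝ≥0∞) ^ z.1 * (1 + (z.1 : ℝ≥0∞)))) < ∞) :
    (∀ n, (∑' z : ℕ × ℕ, P (n+1) z * ((m : ℝ≥0∞) ^ z.1 * (1 + (z.1 : ℝ≥0∞)) * (z.2 : ℝ≥0∞)))
        = (∑' z : ℕ × ℕ, P n z * (m : ℝ≥0∞) ^ z.1) ^ (m - 1)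
          * ∑' z : ℕ × ℕ, P n z * ((m : ℝ≥0∞) ^ z.1 * (1 + (z.1 : ℝ≥0∞)) * (z.2 : ℝ≥0∞))) ∧
    ∀ n, (∑' z : ℕ × ℕ, P n z * ((m : ℝ≥0∞) ^ z.1 * (1 + (z.1 : ℝ≥0∞)) * (z.2 : ℝ≥0∞)))
        = (∑' z : ℕ × ℕ, P 0 z * ((m : ℝ≥0∞) ^ z.1 * (1 + (z.1 : ℝ≥0∞)) * (z.2 : ℝ≥0∞)))
          * ∏ k ∈ Finset.range n,
              (∑' z : ℕ × ℕ, P k z * (m : ℝ≥0∞) ^ z.1) ^ (m - 1) :=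
  stmt17_general m hm P hP hcrit
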